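/- Let n = m be even with n ≥ 8, and consider the Probabilistic Serial mechanism where agent 2 reports o_1 ≻ o_2 ≻ ⋯ ≻ o_n, each agent i ∈ {3,…,n} reports o_2 ≻ o_3 ≻ ⋯ ≻ o_n ≻ o_1, and agent 1 reports o_2 ≻ o_3 ≻ ⋯ ≻ o_{n/2−1} ≻ o_1 ≻ o_{n/2} ≻ ⋯ ≻ o_n. Then agent 1 receives exactly 1/(n−1) of each of the items o_2,…,o_{n/2−1} and exactly (n+2)/(4(n−1)) of item o_1. In particular, if agent 1's utilities are dichotomous with interest set O̅ = {o_1,…,o_{n/2−1}}, this (untruthful) report yields utility u'_1 = 3(n−2)/(4(n−1)), whereas its truthful utility is u_1 = 1/2, so u'_1/u_1 = 3(n−2)/(2(n−1)). -/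

import Mathlib

open MeasureTheory

/-- An execution of the Probabilistic Serial eating process with `n` agents and `m` items
(each of supply 1).  Agent `i` reports the strict preference order encoded by the injective
rank function `rk i` (`rk i j < rk i j'` means agent `i` ranks item `j` above item `j'`).
`active i t` tells whether agent `i` participates (eats at rate 1) at time `t`; the normal
scenario is `active = fun _ _ => True`, pausing/removing agents is modelled by making them
inactive.  `eats i t = some j` means agent `i` is eating item `j` at time `t`, and `rem j t`
is the remaining supply of item `j` at time `t`: it equals `1` minus the total time agents
have spent eating `j` during `(0, t]`.  An active agent always eats its most preferred item
among those with positive remaining supply. -/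
structure PSExec (n m : ℕ) (rk : Fin n → Fin m → ℕ) (active : Fin n → ℝ → Prop) where
  eats : Fin n → ℝ → Option (Fin m)
  rem : Fin m → ℝ → ℝ
  meas : ∀ i j, MeasurableSet {t : ℝ | eats i t = some j}
  rem_def : ∀ j, ∀ t : ℝ, 0 ≤ t →
    rem j t = 1 - ∑ i : Fin n,
      (volume {s : ℝ | 0 < s ∧ s ≤ t ∧ eats i s = some j}).toReal
  eats_iff : ∀ i, ∀ t : ℝ, 0 ≤ t → active i t → ∀ j,
    (eats i t = some j ↔ 0 < rem j t ∧ ∀ j', 0 < rem j' t → rk i j ≤ rk i j')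
  eats_none : ∀ i, ∀ t : ℝ, ¬ active i t → eats i t = none

namespace PSExec

variable {n m : ℕ} {rk : Fin n → Fin m → ℕ} {active : Fin n → ℝ → Prop}

/-- The total amount of item `j` eaten by agent `i` (the allocation `x i j`). -/
noncomputable def alloc (E : PSExec n m rk active) (i : Fin n) (j : Fin m) : ℝ :=
  (volume {s : ℝ | 0 < s ∧ E.eats i s = some j}).toReal

/-- The expected utility of agent `i` with cardinal utilities `a`. -/
noncomputable def utility (E : PSExec n m rk active) (a : Fin m → ℝ) (i : Fin n) : ℝ :=
  ∑ j, a j * E.alloc i j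

/-- Item `j` is exhausted exactly at time `τ`. -/
def exhaustedAt (E : PSExec n m rk active) (j : Fin m) (τ : ℝ) : Prop :=
  0 < τ ∧ E.rem j τ = 0 ∧ ∀ s : ℝ, 0 ≤ s → s < τ → 0 < E.rem j s

/-- Agent `i` is eating item `j` at the moment `τ`, in the left-limit sense (this is the
sense used for "eating an item at the moment of its exhaustion"). -/
def eatsAt (E : PSExec n m rk active) (i : Fin n) (j : Fin m) (τ : ℝ) : Prop :=
  ∃ δ > 0, ∀ s : ℝ, τ - δ < s → s < τ → E.eats i s = some j

/-- `T` is the exact moment at which the last item of `Obar` is exhausted. -/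
def exhaustTime (E : PSExec n m rk active) (Obar : Finset (Fin m)) (T : ℝ) : Prop :=
  (∀ j ∈ Obar, E.rem j T = 0) ∧ ∀ s : ℝ, 0 ≤ s → s < T → ∃ j ∈ Obar, 0 < E.rem j s

end PSExec

/-- Dichotomous cardinal utilities with interest set `Obar`. -/
def dicho {m : ℕ} (Obar : Finset (Fin m)) : Fin m → ℝ :=
  fun j => if j ∈ Obar then 1 else 0

/-!
In both executions the agents split into a set `S` that eats item `o₁` and `d` others that
climb a *staircase*: they eat `o₂, o₃, …` one after another, each in time `1 / d`.
Truthfully `S = {1, 2}` and `d = n - 2`, so `o₁` runs out at time `1 / 2`, exactly when the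
staircase has used up `o₂, …, o_{n/2}`: agent 1 gets half of `o₁` and nothing else of `O̅`.
Under the misreport `S = {2}` and `d = n - 1`: agent 1 climbs with the others, taking
`1 / (n - 1)` of each of `o₂, …, o_{n/2-1}`, and at time `(n - 4) / (2 (n - 1))` joins agent 2
on the rest of `o₁`, of which it gets half, `(n + 2) / (4 (n - 1))`.

Each phase of these executions rests on one continuous-induction argument: as long as every
agent's assigned item is its favourite among those left and has supply for everyone assigned to
it, the assignment persists.
-/

open Set

namespace PSExec

section Eating

variable {n m : ℕ} {rk : Fin n → Fin m → ℕ} {active : Fin n → ℝ → Prop}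
  (E : PSExec n m rk active)

noncomputable def eatenIn (i : Fin n) (j : Fin m) (a b : ℝ) : ℝ :=
  (volume {s : ℝ | a < s ∧ s ≤ b ∧ E.eats i s = some j}).toReal

lemma setOf_eats_eq_Ioc_inter (i : Fin n) (j : Fin m) (a b : ℝ) :
    {s : ℝ | a < s ∧ s ≤ b ∧ E.eats i s = some j} =
      Ioc a b ∩ {s | E.eats i s = some j} := by
  ext s; simp [and_assoc]

lemma volume_setOf_eats_le (i : Fin n) (j : Fin m) (a b : ℝ) :
    volume {s : ℝ | a < s ∧ s ≤ b ∧ E.eats i s = some j} ≤ ENNReal.ofReal (b - a) := by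
  rw [setOf_eats_eq_Ioc_inter, ← Real.volume_Ioc]
  exact measure_mono inter_subset_left

lemma eatenIn_le (i : Fin n) (j : Fin m) {a b : ℝ} (hab : a ≤ b) :
    E.eatenIn i j a b ≤ b - a :=
  ENNReal.toReal_le_of_le_ofReal (sub_nonneg.2 hab) (E.volume_setOf_eats_le i j a b)

lemma eatenIn_add (i : Fin n) (j : Fin m) {a b c : ℝ} (hab : a ≤ b) (hbc : b ≤ c) :
    E.eatenIn i j a c = E.eatenIn i j a b + E.eatenIn i j b c := by
  have hne : ∀ x y, volume {s : ℝ | x < s ∧ s ≤ y ∧ E.eats i s = some j} ≠ ⊤ :=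
    fun x y => ne_top_of_le_ne_top ENNReal.ofReal_ne_top (E.volume_setOf_eats_le i j x y)
  rw [eatenIn, eatenIn, eatenIn, ← ENNReal.toReal_add (hne a b) (hne b c),
    setOf_eats_eq_Ioc_inter, setOf_eats_eq_Ioc_inter, setOf_eats_eq_Ioc_inter,
    ← measure_union _ (measurableSet_Ioc.inter (E.meas i j)),
    ← union_inter_distrib_right, Ioc_union_Ioc_eq_Ioc hab hbc]
  exact (Ioc_disjoint_Ioc_of_le le_rfl).mono inter_subset_left inter_subset_left

lemma eatenIn_eq_of_eats (i : Fin n) (j : Fin m) {a b : ℝ} (hab : a ≤ b)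
    (h : ∀ s ∈ Ioo a b, E.eats i s = some j) : E.eatenIn i j a b = b - a := by
  refine le_antisymm (E.eatenIn_le i j hab) ?_
  rw [eatenIn, ← ENNReal.ofReal_le_iff_le_toReal
    (ne_top_of_le_ne_top ENNReal.ofReal_ne_top (E.volume_setOf_eats_le i j a b)),
    ← Real.volume_Ioo]
  exact measure_mono fun s hs => ⟨hs.1, hs.2.le, h s hs⟩

lemma eatenIn_eq_zero_of_not_eats (i : Fin n) (j : Fin m) {a b : ℝ}
    (h : ∀ s ∈ Ioo a b, E.eats i s ≠ some j) : E.eatenIn i j a b = 0 := by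
  have hsub : {s : ℝ | a < s ∧ s ≤ b ∧ E.eats i s = some j} ⊆ {b} :=
    fun s ⟨has, hsb, hs⟩ => hsb.eq_or_lt.resolve_right fun hlt => h s ⟨has, hlt⟩ hs
  rw [eatenIn, measure_mono_null hsub (measure_singleton b), ENNReal.toReal_zero]

lemma sum_eatenIn_le (i : Fin n) (s : Finset (Fin m)) {a b : ℝ} (hab : a ≤ b) :
    ∑ j ∈ s, E.eatenIn i j a b ≤ b - a := by
  have hdisj : (s : Set (Fin m)).PairwiseDisjoint
      fun j => {t : ℝ | a < t ∧ t ≤ b ∧ E.eats i t = some j} := by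
    intro j _ j' _ hjj'
    refine disjoint_left.2 fun t ht ht' => hjj' ?_
    exact Option.some_injective _ (ht.2.2.symm.trans ht'.2.2)
  have hmeas : ∀ j ∈ s, MeasurableSet {t : ℝ | a < t ∧ t ≤ b ∧ E.eats i t = some j} :=
    fun j _ => by rw [setOf_eats_eq_Ioc_inter]; exact measurableSet_Ioc.inter (E.meas i j)
  have hvol : volume (⋃ j ∈ s, {t : ℝ | a < t ∧ t ≤ b ∧ E.eats i t = some j})
      ≤ ENNReal.ofReal (b - a) := by
    rw [← Real.volume_Ioc]
    exact measure_mono (iUnion₂_subset fun j _ t ht => ⟨ht.1, ht.2.1⟩)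
  rw [measure_biUnion_finset hdisj hmeas] at hvol
  simp only [eatenIn]
  rw [← ENNReal.toReal_sum fun j _ =>
    ne_top_of_le_ne_top ENNReal.ofReal_ne_top (E.volume_setOf_eats_le i j a b)]
  exact ENNReal.toReal_le_of_le_ofReal (sub_nonneg.2 hab) hvol

lemma rem_eq_sub_sum_eatenIn (j : Fin m) {a b : ℝ} (ha : 0 ≤ a) (hab : a ≤ b) :
    E.rem j b = E.rem j a - ∑ i, E.eatenIn i j a b := by
  have hsplit : ∀ i, E.eatenIn i j 0 b = E.eatenIn i j 0 a + E.eatenIn i j a b :=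
    fun i => E.eatenIn_add i j ha hab
  rw [E.rem_def j b (ha.trans hab), E.rem_def j a ha]
  change 1 - ∑ i, E.eatenIn i j 0 b = 1 - ∑ i, E.eatenIn i j 0 a - _
  simp only [hsplit, Finset.sum_add_distrib]
  ring

lemma rem_zero (j : Fin m) : E.rem j 0 = 1 := by
  have h0 : ∀ i, E.eatenIn i j 0 0 = 0 := fun i => E.eatenIn_eq_zero_of_not_eats i j (by simp)
  rw [E.rem_def j 0 le_rfl]
  change 1 - ∑ i, E.eatenIn i j 0 0 = 1
  simp [h0]

lemma rem_le_rem (j : Fin m) {a b : ℝ} (ha : 0 ≤ a) (hab : a ≤ b) :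
    E.rem j b ≤ E.rem j a := by
  rw [E.rem_eq_sub_sum_eatenIn j ha hab, sub_le_self_iff]
  exact Finset.sum_nonneg fun i _ => ENNReal.toReal_nonneg

lemma rem_sub_le (j : Fin m) {a b : ℝ} (ha : 0 ≤ a) (hab : a ≤ b) :
    E.rem j a - n * (b - a) ≤ E.rem j b := by
  rw [E.rem_eq_sub_sum_eatenIn j ha hab, sub_le_sub_iff_left]
  calc ∑ i, E.eatenIn i j a b ≤ ∑ _i : Fin n, (b - a) :=
        Finset.sum_le_sum fun i _ => E.eatenIn_le i j hab
    _ = n * (b - a) := by simp [mul_sub]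

lemma sub_le_sum_rem {t : ℝ} (ht : 0 ≤ t) : m - n * t ≤ ∑ j, E.rem j t := by
  have hrem : ∀ j, E.rem j t = E.rem j 0 - ∑ i, E.eatenIn i j 0 t :=
    fun j => E.rem_eq_sub_sum_eatenIn j le_rfl ht
  simp only [hrem, rem_zero, Finset.sum_sub_distrib, Finset.sum_const, Finset.card_univ,
    Fintype.card_fin, nsmul_eq_mul, mul_one, sub_le_sub_iff_left]
  rw [Finset.sum_comm]
  calc ∑ i, ∑ j, E.eatenIn i j 0 t ≤ ∑ _i : Fin n, (t - 0) :=
        Finset.sum_le_sum fun i _ => E.sum_eatenIn_le i _ ht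
    _ = n * t := by simp

lemma rem_pos_of_eats {i : Fin n} {j : Fin m} {t : ℝ} (ht : 0 ≤ t)
    (h : E.eats i t = some j) : 0 < E.rem j t := by
  by_cases hact : active i t
  · exact ((E.eats_iff i t ht hact j).1 h).1
  · simp [E.eats_none i t hact] at h

lemma eats_ne_of_rem_nonpos (i : Fin n) {j : Fin m} {t s : ℝ} (ht : 0 ≤ t) (hts : t ≤ s)
    (h : E.rem j t ≤ 0) : E.eats i s ≠ some j := fun hs =>
  (E.rem_pos_of_eats (ht.trans hts) hs).not_ge ((E.rem_le_rem j ht hts).trans h)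

lemma exists_ne_rem_pos (j₀ : Fin m) {t : ℝ} (ht : 0 ≤ t) (h : n * t < m - 1) :
    ∃ j ≠ j₀, 0 < E.rem j t := by
  by_contra! hcon
  have hle : ∑ j, E.rem j t ≤ 1 := by
    rw [← Finset.add_sum_erase _ _ (Finset.mem_univ j₀)]
    have := Finset.sum_nonpos fun j (hj : j ∈ Finset.univ.erase j₀) =>
      hcon j (Finset.ne_of_mem_erase hj)
    linarith [E.rem_le_rem j₀ le_rfl ht, E.rem_zero j₀]
  linarith [E.sub_le_sum_rem ht]

lemma rem_eq_of_eats (j : Fin m) (S : Finset (Fin n)) {a b : ℝ} (ha : 0 ≤ a) (hab : a ≤ b)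
    (hS : ∀ i ∈ S, ∀ s ∈ Ioo a b, E.eats i s = some j)
    (hSc : ∀ i ∉ S, ∀ s ∈ Ioo a b, E.eats i s ≠ some j) :
    E.rem j b = E.rem j a - S.card * (b - a) := by
  have heaten : ∀ i, E.eatenIn i j a b = if i ∈ S then b - a else 0 := by
    intro i
    split_ifs with hi
    · exact E.eatenIn_eq_of_eats i j hab (hS i hi)
    · exact E.eatenIn_eq_zero_of_not_eats i j (hSc i hi)
  rw [E.rem_eq_sub_sum_eatenIn j ha hab]
  simp [heaten, Finset.sum_ite_mem, mul_sub]

lemma alloc_eq_of_eats_between (i : Fin n) (j : Fin m) {F : Set ℝ} (hF : F.Countable)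
    {a b : ℝ} (ha : 0 ≤ a) (hab : a ≤ b)
    (hbefore : ∀ s ∈ Ioo 0 a \ F, E.eats i s ≠ some j)
    (hduring : ∀ s ∈ Ioo a b \ F, E.eats i s = some j)
    (hafter : E.rem j b ≤ 0) : E.alloc i j = b - a := by
  have hnull : volume (F ∪ {a}) = 0 := (hF.union (countable_singleton a)).measure_zero _
  have hsub : {s : ℝ | 0 < s ∧ E.eats i s = some j} ⊆ Ioo a b ∪ (F ∪ {a}) := by
    rintro s ⟨hs, hsj⟩
    by_contra hout
    simp only [mem_union, mem_Ioo, mem_singleton_iff, not_or, not_and_or, not_lt] at hout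
    obtain ⟨hab' | hbs, hsF, hsa⟩ := hout
    · exact hbefore s ⟨⟨hs, lt_of_le_of_ne hab' hsa⟩, hsF⟩ hsj
    · exact E.eats_ne_of_rem_nonpos i (ha.trans hab) hbs hafter hsj
  have hsup : Ioo a b \ (F ∪ {a}) ⊆ {s : ℝ | 0 < s ∧ E.eats i s = some j} :=
    fun s hs => ⟨ha.trans_lt hs.1.1, hduring s ⟨hs.1, fun hsF => hs.2 (Or.inl hsF)⟩⟩
  have hvol : volume {s : ℝ | 0 < s ∧ E.eats i s = some j} = volume (Ioo a b) :=
    le_antisymm ((measure_mono hsub).trans ((measure_union_le _ _).trans (by rw [hnull, add_zero])))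
      ((measure_sdiff_null hnull).symm.le.trans (measure_mono hsup))
  rw [alloc, hvol, Real.volume_Ioo, ENNReal.toReal_ofReal (sub_nonneg.2 hab)]

lemma eats_ne_of_ranked_last {i : Fin n} {j : Fin m} (hlast : ∀ j' ≠ j, rk i j' < rk i j)
    {s : ℝ} (hs : 0 ≤ s) (hsm : n * s < m - 1) : E.eats i s ≠ some j := by
  intro h
  obtain ⟨j', hj'j, hj'⟩ := E.exists_ne_rem_pos j hs hsm
  by_cases hact : active i s
  · exact (hlast j' hj'j).not_ge (((E.eats_iff i s hs hact j).1 h).2 j' hj')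
  · simp [E.eats_none i s hact] at h

lemma utility_dicho_initial_segment (i : Fin n) {L : ℕ} (hL : L < m) {A₀ A₁ : ℝ}
    (h₀ : ∀ j : Fin m, (j : ℕ) = 0 → E.alloc i j = A₀)
    (h₁ : ∀ j : Fin m, 1 ≤ (j : ℕ) → (j : ℕ) ≤ L → E.alloc i j = A₁) :
    E.utility (dicho (Finset.univ.filter fun j : Fin m => (j : ℕ) ≤ L)) i =
      A₀ + L * A₁ := by
  set f : ℕ → ℝ := fun k => if k = 0 then A₀ else if k ≤ L then A₁ else 0
  have hterm : ∀ j : Fin m,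
      dicho (Finset.univ.filter fun j : Fin m => (j : ℕ) ≤ L) j * E.alloc i j = f j := by
    intro j
    by_cases h0 : (j : ℕ) = 0
    · simp [dicho, f, h0, h₀ j h0]
    by_cases hjL : (j : ℕ) ≤ L
    · simp [dicho, f, h0, hjL, h₁ j (by omega) hjL]
    · simp [dicho, f, h0, hjL]
  obtain ⟨r, rfl⟩ : ∃ r, m = L + 1 + r := ⟨m - (L + 1), by omega⟩
  have hlow : ∀ k ∈ Finset.range L, f (k + 1) = A₁ := fun k hk => by
    simp [f, Finset.mem_range.1 hk]
  have hhigh : ∀ k ∈ Finset.range r, f (L + 1 + k) = 0 := fun k _ => by simp [f]; omega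
  simp only [utility, hterm, Fin.sum_univ_eq_sum_range f, Finset.sum_range_add,
    Finset.sum_range_succ', Finset.sum_congr rfl hlow, Finset.sum_congr rfl hhigh]
  simp [f]
  ring

end Eating

section Phase

variable {n m : ℕ} {rk : Fin n → Fin m → ℕ} (E : PSExec n m rk fun _ _ => True)

lemma eats_eq_of_favorite {i : Fin n} {j : Fin m} {t₀ s : ℝ} (h0 : 0 ≤ t₀) (hs : t₀ ≤ s)
    (hfav : ∀ j', 0 < E.rem j' t₀ → rk i j ≤ rk i j') (hpos : 0 < E.rem j s) :
    E.eats i s = some j :=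
  (E.eats_iff i s (h0.trans hs) trivial j).2
    ⟨hpos, fun j' hj' => hfav j' (hj'.trans_le (E.rem_le_rem j' h0 hs))⟩

lemma rem_eq_of_assignment (e : Fin n → Option (Fin m)) {a b : ℝ} (ha : 0 ≤ a) (hab : a ≤ b)
    (hpin : ∀ s ∈ Ioo a b, ∀ i j, e i = some j → E.eats i s = some j) (j : Fin m)
    (hidle : ∀ i, e i = none → ∀ s ∈ Ioo a b, E.eats i s ≠ some j) :
    E.rem j b = E.rem j a - (Finset.univ.filter fun i => e i = some j).card * (b - a) := by
  refine E.rem_eq_of_eats j _ ha hab (fun i hi s hs => hpin s hs i j (by simpa using hi)) ?_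
  intro i hi s hs
  cases hei : e i with
  | none => exact hidle i hei s hs
  | some j' =>
    rw [hpin s hs i j' hei]
    intro hjj'
    simp [hei, Option.some_injective _ hjj'] at hi

/-- Continuous induction: while the assignment `e` holds, an assigned item keeps at least
`t₁ - u` at time `u`, and supplies fall at rate at most `n`, so the assignment persists a little
beyond `u`. -/
theorem eats_eq_of_phase {t₀ t₁ : ℝ} (h0 : 0 ≤ t₀) (h01 : t₀ ≤ t₁)
    (e : Fin n → Option (Fin m))
    (hfav : ∀ i j, e i = some j → ∀ j', 0 < E.rem j' t₀ → rk i j ≤ rk i j')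
    (hsupply : ∀ i j, e i = some j →
      (Finset.univ.filter fun i => e i = some j).card * (t₁ - t₀) ≤ E.rem j t₀)
    (hidle : ∀ i, e i = none → ∀ s ∈ Ioo t₀ t₁, ∀ i' j, e i' = some j →
      E.eats i s ≠ some j) :
    ∀ s ∈ Ioo t₀ t₁, ∀ i j, e i = some j → E.eats i s = some j := by
  set G := {s | ∀ i j, e i = some j → E.eats i s = some j}
  suffices t₁ ∈ {u | Ioo t₀ u ⊆ G} from fun s hs => this hs
  have hclosed : IsClosed {u | Ioo t₀ u ⊆ G} := by
    have : {u | Ioo t₀ u ⊆ G} = ⋂ s ∈ Ioi t₀ \ G, Iic s := by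
      ext u
      simp only [mem_ofPred_eq, mem_iInter, mem_Iic]
      exact ⟨fun h s hs => not_lt.1 fun hsu => hs.2 (h ⟨hs.1, hsu⟩),
        fun h s hs => by_contra fun hsG => (h s ⟨hs.1, hsG⟩).not_gt hs.2⟩
    rw [this]
    exact isClosed_biInter fun s _ => isClosed_Iic
  refine (hclosed.inter isClosed_Icc).mem_of_ge_of_forall_exists_gt (by simp) h01 ?_
  rintro u ⟨hpin, hu₀, hu₁⟩
  set ε := (t₁ - u) / (n + 1)
  have hε : 0 < ε := div_pos (sub_pos.2 hu₁) (by positivity)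
  have hnε : n * ε < t₁ - u := by
    rw [mul_div_assoc', div_lt_iff₀ (by positivity)]
    nlinarith
  refine ⟨min (u + ε) t₁, ?_, lt_min (by linarith) hu₁, min_le_right _ _⟩
  intro s ⟨hs₀, hs⟩
  rcases lt_or_ge s u with hsu | hus
  · exact hpin ⟨hs₀, hsu⟩
  intro i j hij
  have hc : (1 : ℝ) ≤ (Finset.univ.filter fun i => e i = some j).card :=
    Nat.one_le_cast.2 (Finset.card_pos.2 ⟨i, by simpa using hij⟩)
  have hremu := E.rem_eq_of_assignment e h0 hu₀ (fun s hs => hpin hs) j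
    fun i' hi' s hs => hidle i' hi' s ⟨hs.1, hs.2.trans hu₁⟩ i j hij
  have hrems := E.rem_sub_le j (h0.trans hu₀) hus
  have hsupp := hsupply i j hij
  have hsε : s - u < ε := by linarith [min_le_left (u + ε) t₁]
  refine E.eats_eq_of_favorite h0 (hu₀.trans hus) (hfav i j hij) ?_
  nlinarith [mul_le_mul_of_nonneg_left hsε.le (Nat.cast_nonneg (α := ℝ) n)]

theorem eats_eq_and_rem_eq_zero_of_shared (P : Finset (Fin n)) (hP : P.Nonempty) (j : Fin m)
    {t₀ : ℝ} (ht₀ : 0 ≤ t₀) (hrem : 0 ≤ E.rem j t₀)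
    (hfav : ∀ i ∈ P, ∀ j', 0 < E.rem j' t₀ → rk i j ≤ rk i j')
    (hlast : ∀ i ∉ P, ∀ j' ≠ j, rk i j' < rk i j)
    (hm : n * (t₀ + E.rem j t₀ / P.card) < m - 1) :
    (∀ s ∈ Ioo t₀ (t₀ + E.rem j t₀ / P.card), ∀ i ∈ P, E.eats i s = some j) ∧
    E.rem j (t₀ + E.rem j t₀ / P.card) = 0 := by
  set T := t₀ + E.rem j t₀ / P.card
  have hc : (0 : ℝ) < P.card := Nat.cast_pos.2 hP.card_pos
  have hT : P.card * (T - t₀) = E.rem j t₀ := by simp only [T]; field_simp; ring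
  set e : Fin n → Option (Fin m) := fun i => if i ∈ P then some j else none
  have he : ∀ i j', e i = some j' → i ∈ P ∧ j' = j := by
    intro i j' hij
    by_cases hi : i ∈ P <;> simp [e, hi] at hij
    exact ⟨hi, hij.symm⟩
  have hcard : (Finset.univ.filter fun i => e i = some j) = P := by ext i; simp [e]
  have hidle : ∀ i, e i = none → ∀ s ∈ Ioo t₀ T, E.eats i s ≠ some j := by
    intro i hi s hs
    have hiP : i ∉ P := by simpa [e] using hi
    refine E.eats_ne_of_ranked_last (hlast i hiP) (ht₀.trans hs.1.le) ?_
    nlinarith [hs.2, (Nat.cast_nonneg n : (0 : ℝ) ≤ n)]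
  have hpin := E.eats_eq_of_phase ht₀ (le_add_of_nonneg_right (by positivity)) e
    (fun i j' hij => (he i j' hij).2 ▸ hfav i (he i j' hij).1)
    (fun i j' hij => by rw [(he i j' hij).2, hcard, hT])
    fun i hi s hs i' j' hj' => (he i' j' hj').2 ▸ hidle i hi s hs
  refine ⟨fun s hs i hi => hpin s hs i j (by simp [e, hi]), ?_⟩
  rw [E.rem_eq_of_assignment e ht₀ (le_add_of_nonneg_right (by positivity)) hpin j hidle, hcard,
    hT, sub_self]

end Phase

section Staircase

variable {n m : ℕ}

/-- The agents of `S` eat item `0` while the `d` others eat items `1, …, K` in turn, each for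
time `1 / d`; `supply` keeps item `0` from running out before time `K / d`. -/
structure IsStaircase (rk : Fin n → Fin m → ℕ) (S : Finset (Fin n)) (K d : ℕ) : Prop where
  card_add : S.card + d = n
  ladder_pos : 0 < d
  lt_items : K < m
  supply : S.card * K ≤ d
  rank_zero : ∀ i ∈ S, ∀ j j' : Fin m, (j : ℕ) = 0 → rk i j ≤ rk i j'
  rank_ladder : ∀ i ∉ S, ∀ j j' : Fin m, 1 ≤ (j : ℕ) → (j : ℕ) ≤ K →
    ((j' : ℕ) = 0 ∨ (j : ℕ) ≤ j') → rk i j ≤ rk i j'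

/-- The supply of item `v` at time `k / d` in a staircase whose item `0` is eaten by `c` agents. -/
noncomputable def stairRem (c d k v : ℕ) : ℝ :=
  if v = 0 then 1 - c * k / d else if v ≤ k then 0 else 1

variable {rk : Fin n → Fin m → ℕ} {S : Finset (Fin n)} {K d : ℕ}
  (E : PSExec n m rk fun _ _ => True)

lemma card_filter_staircase_assignment (hd : S.card + d = n) {o l : Fin m} (hlo : l ≠ o)
    (j : Fin m) :
    ((Finset.univ.filter fun i => some (if i ∈ S then o else l) = some j).card : ℝ) =
      if j = o then (S.card : ℝ) else if j = l then (d : ℝ) else 0 := by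
  split_ifs with hjo hjl
  · subst hjo
    congr 2
    ext i
    by_cases hi : i ∈ S <;> simp [hi, hlo]
  · subst hjl
    have : (Finset.univ.filter fun i => some (if i ∈ S then o else j) = some j) = Sᶜ := by
      ext i
      by_cases hi : i ∈ S <;> simp [hi, Ne.symm hjo]
    rw [this, Finset.card_compl, Fintype.card_fin]
    exact_mod_cast (by omega : n - S.card = d)
  · rw [Nat.cast_eq_zero, Finset.card_eq_zero, Finset.filter_eq_empty_iff]
    intro i _
    by_cases hi : i ∈ S <;> simp [hi, Ne.symm hjo, Ne.symm hjl]

lemma IsStaircase.rank_le_of_stairRem_pos (hst : IsStaircase rk S K d) {i : Fin n} (hi : i ∉ S)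
    {k : ℕ} (hk : k < K) {l j' : Fin m} (hl : (l : ℕ) = k + 1)
    (hj' : 0 < stairRem S.card d k j') : rk i l ≤ rk i j' := by
  refine hst.rank_ladder i hi l j' (by omega) (by omega) ?_
  rw [stairRem] at hj'
  by_contra! h
  split_ifs at hj' <;> first | omega | linarith

lemma IsStaircase.step (hst : IsStaircase rk S K d) {k : ℕ} (hk : k < K)
    (hrem : ∀ j : Fin m, E.rem j (k / d) = stairRem S.card d k j) :
    (∀ s ∈ Ioo ((k : ℝ) / d) ((k + 1 : ℕ) / d), ∀ i j,
      E.eats i s = some j ↔ (j : ℕ) = if i ∈ S then 0 else k + 1) ∧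
    ∀ j : Fin m, E.rem j ((k + 1 : ℕ) / d) = stairRem S.card d (k + 1) j := by
  have hK := hst.lt_items
  have hd0 := hst.ladder_pos
  set o : Fin m := ⟨0, by omega⟩
  set l : Fin m := ⟨k + 1, by omega⟩
  have hlo : l ≠ o := by simp [o, l, Fin.ext_iff]
  set e : Fin n → Option (Fin m) := fun i => some (if i ∈ S then o else l)
  have hdR : (0 : ℝ) < d := Nat.cast_pos.2 hd0
  have hlen : ((k + 1 : ℕ) : ℝ) / d - k / d = 1 / d := by push_cast; ring
  have hcard := card_filter_staircase_assignment hst.card_add hlo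
  have hpin := E.eats_eq_of_phase (t₀ := k / d) (t₁ := (k + 1 : ℕ) / d) (by positivity)
    (by gcongr; omega) e ?fav ?supply (fun i hi => by simp [e] at hi)
  case fav =>
    intro i j hij j' hj'
    simp only [e, Option.some.injEq] at hij
    subst hij
    by_cases hi : i ∈ S
    · simpa [hi] using hst.rank_zero i hi o j' rfl
    · simpa [hi] using hst.rank_le_of_stairRem_pos hi hk (l := l) rfl (hrem j' ▸ hj')
  case supply =>
    intro i j hij
    simp only [e, Option.some.injEq] at hij
    subst hij
    rw [hcard, hlen, hrem, stairRem]
    by_cases hi : i ∈ S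
    · simp only [hi, if_true, o]
      rw [← sub_nonneg]
      have : (S.card : ℝ) * (k + 1) ≤ d := by
        exact_mod_cast (Nat.mul_le_mul_left _ hk).trans hst.supply
      field_simp
      linarith
    · simp [hi, hlo, l, hdR.ne']
  refine ⟨fun s hs i j => ?_, fun j => ?_⟩
  · rw [hpin s hs i _ rfl, Option.some_inj, Fin.ext_iff]
    by_cases hi : i ∈ S <;> simp [hi, o, l, eq_comm]
  · rw [E.rem_eq_of_assignment e (by positivity) (by gcongr; omega) hpin j
      (fun i hi => by simp [e] at hi), hcard, hlen, hrem]
    simp only [stairRem, o, l, Fin.ext_iff]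
    split_ifs <;> first | omega | (push_cast; field_simp; ring)

lemma IsStaircase.rem_eq (hst : IsStaircase rk S K d) {k : ℕ} (hk : k ≤ K) (j : Fin m) :
    E.rem j (k / d) = stairRem S.card d k j := by
  induction k generalizing j with
  | zero => simp [stairRem, E.rem_zero]
  | succ k ih => exact (hst.step E (by omega) (ih (by omega))).2 j

lemma IsStaircase.eats_iff (hst : IsStaircase rk S K d) {s : ℝ} (hs : s ∈ Ioo 0 ((K : ℝ) / d))
    (hgrid : s ∉ range fun k : ℕ => (k : ℝ) / d) (i : Fin n) (j : Fin m) :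
    E.eats i s = some j ↔ (j : ℕ) = if i ∈ S then 0 else ⌊s * d⌋₊ + 1 := by
  have hdR : (0 : ℝ) < d := Nat.cast_pos.2 hst.ladder_pos
  have hsd : 0 ≤ s * d := by nlinarith [hs.1]
  set k := ⌊s * d⌋₊
  have hk : (k : ℝ) < s * d := (Nat.floor_le hsd).lt_of_ne
    fun h => hgrid ⟨k, show (k : ℝ) / d = s by rw [div_eq_iff hdR.ne']; exact h⟩
  have hkK : k < K := (Nat.floor_lt hsd).2 ((lt_div_iff₀ hdR).1 hs.2)
  refine (hst.step E hkK (hst.rem_eq E hkK.le)).1 s ⟨?_, ?_⟩ i j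
  · rwa [div_lt_iff₀ hdR]
  · rw [lt_div_iff₀ hdR]; push_cast; exact Nat.lt_floor_add_one _

lemma IsStaircase.alloc_ladder_of_mem (hst : IsStaircase rk S K d) {i : Fin n} (hi : i ∈ S)
    {j : Fin m} (hj₁ : 1 ≤ (j : ℕ)) (hjK : (j : ℕ) ≤ K) : E.alloc i j = 0 := by
  have h := E.alloc_eq_of_eats_between i j (countable_range fun k : ℕ => (k : ℝ) / d)
    (a := K / d) (b := K / d) (by positivity) le_rfl ?_ (by simp) ?_
  · rwa [sub_self] at h
  · exact fun s hs => by rw [Ne, hst.eats_iff E hs.1 hs.2]; simp [hi]; omega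
  · rw [hst.rem_eq E le_rfl, stairRem, if_neg (by omega), if_pos hjK]

lemma IsStaircase.alloc_zero_of_mem (hst : IsStaircase rk S K d) (hsupply : S.card * K = d)
    {i : Fin n} (hi : i ∈ S) {j : Fin m} (hj : (j : ℕ) = 0) : E.alloc i j = K / d := by
  have hdR : (0 : ℝ) < d := Nat.cast_pos.2 hst.ladder_pos
  have h := E.alloc_eq_of_eats_between i j (countable_range fun k : ℕ => (k : ℝ) / d)
    (a := 0) (b := K / d) le_rfl (by positivity) (by simp)
    (fun s hs => by rw [hst.eats_iff E hs.1 hs.2]; simp [hi, hj]) ?_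
  · rwa [sub_zero] at h
  · have hc : (S.card : ℝ) * K = d := by exact_mod_cast hsupply
    rw [hst.rem_eq E le_rfl, stairRem, if_pos hj, hc, div_self hdR.ne', sub_self]

lemma IsStaircase.alloc_ladder_of_not_mem (hst : IsStaircase rk S K d) {i : Fin n} (hi : i ∉ S)
    {j : Fin m} (hj₁ : 1 ≤ (j : ℕ)) (hjK : (j : ℕ) ≤ K) : E.alloc i j = 1 / d := by
  have hdR : (0 : ℝ) < d := Nat.cast_pos.2 hst.ladder_pos
  have hab : (((j : ℕ) - 1 : ℕ) : ℝ) / d ≤ (j : ℕ) / d := by gcongr; omega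
  have hbK : ((j : ℕ) : ℝ) / d ≤ K / d := by gcongr
  have h := E.alloc_eq_of_eats_between i j (countable_range fun k : ℕ => (k : ℝ) / d)
    (a := ((j : ℕ) - 1 : ℕ) / d) (b := (j : ℕ) / d) (by positivity) hab ?_ ?_ ?_
  · rw [h, ← sub_div, Nat.cast_sub hj₁, Nat.cast_one, sub_sub_cancel]
  · intro s hs
    have hsK : s ∈ Ioo 0 ((K : ℝ) / d) := ⟨hs.1.1, hs.1.2.trans_le (hab.trans hbK)⟩
    rw [Ne, hst.eats_iff E hsK hs.2, if_neg hi]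
    have : ⌊s * d⌋₊ < (j : ℕ) - 1 :=
      (Nat.floor_lt (by nlinarith [hs.1.1])).2 ((lt_div_iff₀ hdR).1 hs.1.2)
    omega
  · intro s hs
    have ha : (0 : ℝ) ≤ ((j : ℕ) - 1 : ℕ) / d := by positivity
    have hsK : s ∈ Ioo 0 ((K : ℝ) / d) := ⟨ha.trans_lt hs.1.1, hs.1.2.trans_le hbK⟩
    rw [hst.eats_iff E hsK hs.2, if_neg hi]
    have : ⌊s * d⌋₊ = (j : ℕ) - 1 := by
      rw [Nat.floor_eq_iff (by nlinarith [hsK.1])]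
      refine ⟨((div_lt_iff₀ hdR).1 hs.1.1).le, ?_⟩
      rw [Nat.cast_sub hj₁, Nat.cast_one, sub_add_cancel]
      exact (lt_div_iff₀ hdR).1 hs.1.2
    omega
  · rw [hst.rem_eq E hjK, stairRem, if_neg (by omega), if_pos le_rfl]

end Staircase

section TightExample

variable {n : ℕ}

lemma cast_half_sub (hne : Even n) {k : ℕ} (hk : k ≤ n / 2) :
    ((n / 2 - k : ℕ) : ℝ) = n / 2 - k := by
  obtain ⟨r, rfl⟩ := hne
  rw [Nat.cast_sub hk, ← two_mul, Nat.mul_div_cancel_left _ two_pos]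
  push_cast
  ring

lemma card_filter_val_le_one (hn : 2 ≤ n) :
    (Finset.univ.filter fun i : Fin n => (i : ℕ) ≤ 1).card = 2 := by
  rw [show (Finset.univ.filter fun i : Fin n => (i : ℕ) ≤ 1) =
      {⟨0, by omega⟩, ⟨1, by omega⟩} by
    ext i; simp [Fin.ext_iff]; omega]
  rfl

lemma card_filter_val_eq_one (hn : 2 ≤ n) :
    (Finset.univ.filter fun i : Fin n => (i : ℕ) = 1).card = 1 := by
  rw [show (Finset.univ.filter fun i : Fin n => (i : ℕ) = 1) = {⟨1, by omega⟩} by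
    ext i; simp [Fin.ext_iff]]
  rfl

lemma isStaircase_truthful (hn : 8 ≤ n) (hne : Even n) {rk : Fin n → Fin n → ℕ}
    (hrk12 : ∀ i : Fin n, (i : ℕ) ≤ 1 → ∀ j : Fin n, rk i j = (j : ℕ))
    (hrkrest : ∀ i : Fin n, 2 ≤ (i : ℕ) → ∀ j : Fin n,
        rk i j = if (j : ℕ) = 0 then n else (j : ℕ)) :
    IsStaircase rk (Finset.univ.filter fun i : Fin n => (i : ℕ) ≤ 1) (n / 2 - 1) (n - 2) where
  card_add := by rw [card_filter_val_le_one (by omega)]; omega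
  ladder_pos := by omega
  lt_items := by omega
  supply := by obtain ⟨r, rfl⟩ := hne; rw [card_filter_val_le_one (by omega)]; omega
  rank_zero i hi j j' hj := by
    rw [Finset.mem_filter] at hi
    rw [hrk12 i hi.2, hrk12 i hi.2, hj]
    exact Nat.zero_le _
  rank_ladder i hi j j' hj₁ _ hj' := by
    have hi2 : 2 ≤ (i : ℕ) := by simp at hi; omega
    rw [hrkrest i hi2, hrkrest i hi2, if_neg (by omega)]
    split_ifs <;> omega

lemma isStaircase_misreport (hn : 8 ≤ n) {rk' : Fin n → Fin n → ℕ} {i1 : Fin n}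
    (hi1 : (i1 : ℕ) = 0)
    (hrk'1 : ∀ j : Fin n, rk' i1 j =
        if (j : ℕ) = 0 then n / 2 - 2
        else if (j : ℕ) ≤ n / 2 - 2 then (j : ℕ) - 1 else (j : ℕ))
    (hrk'2 : ∀ i : Fin n, (i : ℕ) = 1 → ∀ j : Fin n, rk' i j = (j : ℕ))
    (hrk'rest : ∀ i : Fin n, 2 ≤ (i : ℕ) → ∀ j : Fin n,
        rk' i j = if (j : ℕ) = 0 then n else (j : ℕ)) :
    IsStaircase rk' (Finset.univ.filter fun i : Fin n => (i : ℕ) = 1) (n / 2 - 2) (n - 1) where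
  card_add := by rw [card_filter_val_eq_one (by omega)]; omega
  ladder_pos := by omega
  lt_items := by omega
  supply := by rw [card_filter_val_eq_one (by omega)]; omega
  rank_zero i hi j j' hj := by
    rw [Finset.mem_filter] at hi
    rw [hrk'2 i hi.2, hrk'2 i hi.2, hj]
    exact Nat.zero_le _
  rank_ladder i hi j j' hj₁ hjK hj' := by
    rcases Nat.lt_or_ge (i : ℕ) 2 with hi2 | hi2
    · obtain rfl : i = i1 := Fin.ext (by simp at hi; omega)
      rw [hrk'1, hrk'1, if_neg (by omega), if_pos hjK]
      split_ifs <;> omega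
    · rw [hrk'rest i hi2, hrk'rest i hi2, if_neg (by omega)]
      split_ifs <;> omega

theorem alloc_truthful (hn : 8 ≤ n) (hne : Even n) {rk : Fin n → Fin n → ℕ} {i1 : Fin n}
    (hi1 : (i1 : ℕ) = 0)
    (hrk12 : ∀ i : Fin n, (i : ℕ) ≤ 1 → ∀ j : Fin n, rk i j = (j : ℕ))
    (hrkrest : ∀ i : Fin n, 2 ≤ (i : ℕ) → ∀ j : Fin n,
        rk i j = if (j : ℕ) = 0 then n else (j : ℕ))
    (E : PSExec n n rk fun _ _ => True) :
    (∀ j : Fin n, 1 ≤ (j : ℕ) → (j : ℕ) ≤ n / 2 - 2 → E.alloc i1 j = 0) ∧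
    ∀ j : Fin n, (j : ℕ) = 0 → E.alloc i1 j = 1 / 2 := by
  have hst := isStaircase_truthful hn hne hrk12 hrkrest
  have hi : i1 ∈ Finset.univ.filter fun i : Fin n => (i : ℕ) ≤ 1 := by simp [hi1]
  refine ⟨fun j hj₁ hj => hst.alloc_ladder_of_mem E hi hj₁ (by omega), fun j hj => ?_⟩
  have hsupply :
      (Finset.univ.filter fun i : Fin n => (i : ℕ) ≤ 1).card * (n / 2 - 1) = n - 2 := by
    obtain ⟨r, rfl⟩ := hne
    rw [card_filter_val_le_one (by omega)]
    omega
  have hnR : (8 : ℝ) ≤ n := by exact_mod_cast hn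
  rw [hst.alloc_zero_of_mem E hsupply hi hj, cast_half_sub hne (by omega),
    Nat.cast_sub (by omega : 2 ≤ n)]
  push_cast
  rw [div_eq_iff (by linarith)]
  ring

lemma misreport_ladder_end (hn : 8 ≤ n) (hne : Even n) :
    ((n / 2 - 2 : ℕ) : ℝ) / (n - 1 : ℕ) = (n - 4) / (2 * (n - 1)) := by
  have : (n : ℝ) - 1 ≠ 0 := by
    have : (8 : ℝ) ≤ n := by exact_mod_cast hn
    linarith
  rw [cast_half_sub hne (by omega), Nat.cast_sub (by omega), Nat.cast_one]
  field_simp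
  ring

lemma misreport_share_end (hn : 8 ≤ n) :
    (n : ℝ) * ((n - 4) / (2 * (n - 1)) + (1 - (n - 4) / (2 * (n - 1))) / 2) < n - 1 := by
  have hnR : (8 : ℝ) ≤ n := by exact_mod_cast hn
  have hT : (n - 4) / (2 * (n - 1)) + (1 - (n - 4) / (2 * (n - 1))) / 2
      = ((3 * n - 6) / (4 * (n - 1)) : ℝ) := by
    have : (n : ℝ) - 1 ≠ 0 := by linarith
    field_simp
    ring
  rw [hT, mul_div_assoc', div_lt_iff₀ (by linarith)]
  nlinarith

lemma misreport_rank_zero_le {rk' : Fin n → Fin n → ℕ} {i1 : Fin n} (hi1 : (i1 : ℕ) = 0)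
    (hrk'1 : ∀ j : Fin n, rk' i1 j =
        if (j : ℕ) = 0 then n / 2 - 2
        else if (j : ℕ) ≤ n / 2 - 2 then (j : ℕ) - 1 else (j : ℕ))
    (hrk'2 : ∀ i : Fin n, (i : ℕ) = 1 → ∀ j : Fin n, rk' i j = (j : ℕ))
    {i : Fin n} (hi : (i : ℕ) ≤ 1) {j j' : Fin n} (hj : (j : ℕ) = 0)
    (hj' : 0 < stairRem 1 (n - 1) (n / 2 - 2) j') : rk' i j ≤ rk' i j' := by
  rcases hi.lt_or_eq with hi0 | hi1'
  · obtain rfl : i = i1 := Fin.ext (by omega)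
    rw [stairRem] at hj'
    rw [hrk'1, hrk'1, if_pos hj]
    split_ifs at hj' ⊢ <;> first | omega | linarith
  · rw [hrk'2 i hi1', hrk'2 i hi1', hj]
    exact Nat.zero_le _

theorem alloc_misreport (hn : 8 ≤ n) (hne : Even n) {rk' : Fin n → Fin n → ℕ} {i1 : Fin n}
    (hi1 : (i1 : ℕ) = 0)
    (hrk'1 : ∀ j : Fin n, rk' i1 j =
        if (j : ℕ) = 0 then n / 2 - 2
        else if (j : ℕ) ≤ n / 2 - 2 then (j : ℕ) - 1 else (j : ℕ))
    (hrk'2 : ∀ i : Fin n, (i : ℕ) = 1 → ∀ j : Fin n, rk' i j = (j : ℕ))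
    (hrk'rest : ∀ i : Fin n, 2 ≤ (i : ℕ) → ∀ j : Fin n,
        rk' i j = if (j : ℕ) = 0 then n else (j : ℕ))
    (E' : PSExec n n rk' fun _ _ => True) :
    (∀ j : Fin n, 1 ≤ (j : ℕ) → (j : ℕ) ≤ n / 2 - 2 →
      E'.alloc i1 j = 1 / ((n : ℝ) - 1)) ∧
    ∀ j : Fin n, (j : ℕ) = 0 → E'.alloc i1 j = ((n : ℝ) + 2) / (4 * ((n : ℝ) - 1)) := by
  have hst := isStaircase_misreport hn hi1 hrk'1 hrk'2 hrk'rest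
  have hi : i1 ∉ Finset.univ.filter fun i : Fin n => (i : ℕ) = 1 := by simp [hi1]
  have hnR : (8 : ℝ) ≤ n := by exact_mod_cast hn
  refine ⟨fun j hj₁ hj => ?_, fun j hj => ?_⟩
  · rw [hst.alloc_ladder_of_not_mem E' hi hj₁ hj, Nat.cast_sub (by omega), Nat.cast_one]
  set t₀ : ℝ := ((n / 2 - 2 : ℕ) : ℝ) / (n - 1 : ℕ)
  have ht₀ : t₀ = (n - 4) / (2 * (n - 1)) := misreport_ladder_end hn hne
  have hrem : ∀ j', E'.rem j' t₀ = stairRem 1 (n - 1) (n / 2 - 2) j' := fun j' => by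
    rw [hst.rem_eq E' le_rfl, card_filter_val_eq_one (by omega)]
  have hrem₀ : E'.rem j t₀ = 1 - t₀ := by
    rw [hrem, stairRem, if_pos hj, Nat.cast_one, one_mul]
  have ht₀1 : t₀ ≤ 1 := by rw [ht₀, div_le_one (by linarith)]; linarith
  obtain ⟨hpin, hremT⟩ := E'.eats_eq_and_rem_eq_zero_of_shared
    (Finset.univ.filter fun i : Fin n => (i : ℕ) ≤ 1) ⟨i1, by simp [hi1]⟩ j (by positivity)
    (by linarith) (fun i hi j' hj' => misreport_rank_zero_le hi1 hrk'1 hrk'2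
      (Finset.mem_filter.1 hi).2 hj (hrem j' ▸ hj'))
    (fun i hi j' hj' => by
      have hi2 : 2 ≤ (i : ℕ) := by simp at hi; omega
      rw [hrk'rest i hi2, hrk'rest i hi2, if_pos hj,
        if_neg fun h => hj' (Fin.ext (h.trans hj.symm))]
      exact j'.isLt)
    (by
      rw [hrem₀, card_filter_val_le_one (by omega), ht₀, Nat.cast_ofNat]
      exact misreport_share_end hn)
  rw [E'.alloc_eq_of_eats_between i1 j (countable_range _) (by positivity)
    (le_add_of_nonneg_right (by rw [hrem₀]; positivity))
    (fun s hs => by rw [Ne, hst.eats_iff E' hs.1 hs.2, if_neg hi, hj]; omega)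
    (fun s hs => hpin s hs.1 i1 (by simp [hi1])) hremT.le,
    hrem₀, card_filter_val_le_one (by omega), ht₀]
  have : (n : ℝ) - 1 ≠ 0 := by linarith
  field_simp
  ring

end TightExample

end PSExec

/-- tight example, manipulation: `n = m` even, `n ≥ 8`; agent 2 reports
`o₁ ≻ o₂ ≻ ⋯ ≻ oₙ`, agents `3, …, n` report `o₂ ≻ ⋯ ≻ oₙ ≻ o₁`, and agent 1 misreports
`o₂ ≻ o₃ ≻ ⋯ ≻ o_{n/2-1} ≻ o₁ ≻ o_{n/2} ≻ ⋯ ≻ oₙ` (items indexed so that `o_k` has index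
`k - 1`).  Then agent 1 receives `1/(n-1)` of each of `o₂, …, o_{n/2-1}` and
`(n+2)/(4(n-1))` of `o₁`; with dichotomous utilities on `O̅ = {o₁, …, o_{n/2-1}}` the
misreport yields utility `3(n-2)/(4(n-1))` while the truthful utility is `1/2`, giving the
ratio `3(n-2)/(2(n-1))`. -/
theorem tight_example_manipulation
    (n : ℕ) (hn : 8 ≤ n) (hne : Even n)
    (rk rk' : Fin n → Fin n → ℕ)
    (i1 : Fin n) (hi1 : (i1 : ℕ) = 0)
    (hrk12 : ∀ i : Fin n, (i : ℕ) ≤ 1 → ∀ j : Fin n, rk i j = (j : ℕ))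
    (hrkrest : ∀ i : Fin n, 2 ≤ (i : ℕ) → ∀ j : Fin n,
        rk i j = if (j : ℕ) = 0 then n else (j : ℕ))
    (hrk'1 : ∀ j : Fin n, rk' i1 j =
        if (j : ℕ) = 0 then n / 2 - 2
        else if (j : ℕ) ≤ n / 2 - 2 then (j : ℕ) - 1 else (j : ℕ))
    (hsame : ∀ i : Fin n, i ≠ i1 → rk' i = rk i)
    (E : PSExec n n rk (fun _ _ => True))
    (E' : PSExec n n rk' (fun _ _ => True)) :
    (∀ j : Fin n, 1 ≤ (j : ℕ) → (j : ℕ) ≤ n / 2 - 2 →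
        E'.alloc i1 j = 1 / ((n : ℝ) - 1)) ∧
    E'.alloc i1 ⟨0, by omega⟩ = ((n : ℝ) + 2) / (4 * ((n : ℝ) - 1)) ∧
    E'.utility (dicho (Finset.univ.filter (fun j : Fin n => (j : ℕ) ≤ n / 2 - 2))) i1
      = 3 * ((n : ℝ) - 2) / (4 * ((n : ℝ) - 1)) ∧
    E.utility (dicho (Finset.univ.filter (fun j : Fin n => (j : ℕ) ≤ n / 2 - 2))) i1
      = 1 / 2 ∧
    E'.utility (dicho (Finset.univ.filter (fun j : Fin n => (j : ℕ) ≤ n / 2 - 2))) i1 /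
        E.utility (dicho (Finset.univ.filter (fun j : Fin n => (j : ℕ) ≤ n / 2 - 2))) i1
      = 3 * ((n : ℝ) - 2) / (2 * ((n : ℝ) - 1)) := by
  have hrk'2 : ∀ i : Fin n, (i : ℕ) = 1 → ∀ j : Fin n, rk' i j = (j : ℕ) := fun i hi => by
    rw [hsame i (by rintro rfl; omega)]
    exact hrk12 i hi.le
  have hrk'rest : ∀ i : Fin n, 2 ≤ (i : ℕ) → ∀ j : Fin n,
      rk' i j = if (j : ℕ) = 0 then n else (j : ℕ) := fun i hi => by
    rw [hsame i (by rintro rfl; omega)]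
    exact hrkrest i hi
  obtain ⟨hmis, hmis₀⟩ := PSExec.alloc_misreport hn hne hi1 hrk'1 hrk'2 hrk'rest E'
  obtain ⟨htru, htru₀⟩ := PSExec.alloc_truthful hn hne hi1 hrk12 hrkrest E
  have hu' := E'.utility_dicho_initial_segment i1 (by omega) hmis₀ hmis
  have hu := E.utility_dicho_initial_segment i1 (by omega) htru₀ htru
  rw [PSExec.cast_half_sub hne (by omega)] at hu' hu
  have hn1 : (n : ℝ) - 1 ≠ 0 := by
    have : (8 : ℝ) ≤ n := by exact_mod_cast hn
    linarith
  refine ⟨hmis, hmis₀ _ rfl, ?_, ?_, ?_⟩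
  · rw [hu']; field_simp; ring
  · rw [hu]; ring
  · rw [hu', hu]; field_simp; ring
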